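/- arXiv:math/0307345 — 6 statements merged into one kernel-verified Lean document; each statement's English description precedes it below -/
import Mathlib

section
/- For every integer k ≥ 1: the quotient of the dihedral group of order 2^{k+2} by its center is isomorphic to the dihedral group of order 2^{k+1} (in Mathlib terms, DihedralGroup (2^{k+1}) ⧸ center (DihedralGroup (2^{k+1})) ≃* DihedralGroup (2^k)); consequently the dihedral group of order 2^{k+1} is capable, and moreover its nilpotency class equals k. In particular, for p = 2 the bound α_r ≤ α_{r-1} + (k-1) from the necessary condition for capability is attained: the dihedral group of order 2^{k+1} is a capable 2-group of class k with a minimal generating set consisting of an element of order 2 and an element of order 2^k. -/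
universe u

/-- A group is capable if it is a central quotient `H/Z(H)` of some group `H`. -/
def IsCapable (G : Type u) [Group G] : Prop :=
  ∃ (H : Type u) (_ : Group H), Nonempty ((H ⧸ Subgroup.center H) ≃* G)

/-!
Since `⁅r a, sr b⁆ = r (2 * a)` and every commutator is a rotation by an even amount,
commuting with the whole group doubles the generator of a group of rotations, so the
`(i + 1)`-st term of the lower central series of `DihedralGroup n` is `⟨r (2 ^ (i + 1))⟩`;
for `n = 2 ^ k` it first vanishes at `i + 1 = k`. A rotation `r i` is central iff `2 * i = 0`,
and a reflection only when `n ∣ 2`, so the centre of `DihedralGroup (2 * m)` is the kernel of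
reduction modulo `m`. Finally `sr 0` and `r 1` generate, while a single element cannot, as
dihedral groups of order greater than `2` are not cyclic.
-/

open DihedralGroup Subgroup
open scoped commutatorElement

theorem Subgroup.closure_ne_top_of_ssubset_pair {G : Type*} [Group G] (hG : ¬IsCyclic G)
    {a b : G} {s : Set G} (hs : s ⊂ {a, b}) : closure s ≠ ⊤ := by
  obtain ⟨x, hx⟩ : ∃ x, s ⊆ {x} := by
    rcases Set.subset_pair_iff_eq.mp hs.subset with rfl | rfl | rfl | rfl
    · exact ⟨a, Set.empty_subset _⟩
    · exact ⟨a, subset_rfl⟩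
    · exact ⟨b, subset_rfl⟩
    · exact absurd hs (ssubset_irrefl _)
  intro htop
  refine hG (isCyclic_iff_exists_zpowers_eq_top.mpr ⟨x, top_le_iff.mp ?_⟩)
  rw [← htop, zpowers_eq_closure]
  exact closure_mono hx

theorem ZMod.castHom_eq_zero_iff_two_mul_eq_zero {m : ℕ} (i : ZMod (2 * m)) :
    ZMod.castHom (dvd_mul_left m 2) (ZMod m) i = 0 ↔ 2 * i = 0 := by
  obtain ⟨z, rfl⟩ := ZMod.intCast_surjective i
  rw [map_intCast, ← Int.cast_two, ← Int.cast_mul, ZMod.intCast_zmod_eq_zero_iff_dvd,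
    ZMod.intCast_zmod_eq_zero_iff_dvd, Nat.cast_mul, Nat.cast_two,
    mul_dvd_mul_iff_left two_ne_zero]

theorem ZMod.two_ne_zero_of_ne_one {m : ℕ} (hm : m ≠ 1) : (2 : ZMod (2 * m)) ≠ 0 := by
  intro h
  have h' : ((2 : ℕ) : ZMod (2 * m)) = 0 := by exact_mod_cast h
  rw [ZMod.natCast_eq_zero_iff] at h'
  exact hm (Nat.dvd_one.mp (Nat.dvd_of_mul_dvd_mul_left two_pos h'))

namespace DihedralGroup

variable {n m : ℕ}

theorem commutatorElement_r_r (a b : ZMod n) : ⁅r a, r b⁆ = 1 := by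
  rw [commutatorElement_def, inv_r, inv_r, r_mul_r, r_mul_r, r_mul_r, one_def]
  ring_nf

theorem commutatorElement_r_sr (a b : ZMod n) : ⁅r a, sr b⁆ = r (2 * a) := by
  rw [commutatorElement_def, inv_r, inv_sr, r_mul_sr, sr_mul_r, sr_mul_sr]
  ring_nf

theorem commutatorElement_sr_r (a b : ZMod n) : ⁅sr a, r b⁆ = r (2 * -b) := by
  rw [commutatorElement_def, inv_r, inv_sr, sr_mul_r, sr_mul_sr, r_mul_r]
  ring_nf

theorem commutatorElement_sr_sr (a b : ZMod n) : ⁅sr a, sr b⁆ = r (2 * (b - a)) := by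
  rw [commutatorElement_def, inv_sr, inv_sr, sr_mul_sr, r_mul_sr, sr_mul_sr]
  ring_nf

theorem r_mul_mem_zpowers (c x : ZMod n) : r (c * x) ∈ zpowers (r c) := by
  obtain ⟨t, rfl⟩ := ZMod.intCast_surjective x
  exact ⟨t, r_zpow c t⟩

theorem commutator_top_top : ⁅(⊤ : Subgroup (DihedralGroup n)), ⊤⁆ = zpowers (r (2 : ZMod n)) := by
  refine le_antisymm (commutator_le.mpr ?_) (zpowers_le.mpr ?_)
  · rintro (a | a) - (b | b) -
    · rw [commutatorElement_r_r]; exact one_mem _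
    · rw [commutatorElement_r_sr]; exact r_mul_mem_zpowers 2 a
    · rw [commutatorElement_sr_r]; exact r_mul_mem_zpowers 2 (-b)
    · rw [commutatorElement_sr_sr]; exact r_mul_mem_zpowers 2 (b - a)
  · rw [← mul_one (2 : ZMod n), ← commutatorElement_r_sr 1 0]
    exact commutator_mem_commutator (mem_top _) (mem_top _)

theorem commutator_zpowers_r_top (c : ZMod n) :
    ⁅zpowers (r c), (⊤ : Subgroup (DihedralGroup n))⁆ = zpowers (r (2 * c)) := by
  refine le_antisymm (commutator_le.mpr ?_) (zpowers_le.mpr ?_)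
  · rintro g hg (b | b) - <;> obtain ⟨t, rfl⟩ := mem_zpowers_iff.mp hg
    · rw [r_zpow, commutatorElement_r_r]; exact one_mem _
    · rw [r_zpow, commutatorElement_r_sr, ← mul_assoc]; exact r_mul_mem_zpowers _ _
  · rw [← commutatorElement_r_sr c 0]
    exact commutator_mem_commutator (mem_zpowers _) (mem_top _)

theorem lowerCentralSeries_top_succ (i : ℕ) :
    (⊤ : Subgroup (DihedralGroup n)).lowerCentralSeries (i + 1) = zpowers (r (2 ^ (i + 1))) := by
  induction i with
  | zero => rw [Subgroup.lowerCentralSeries_succ, Subgroup.lowerCentralSeries_zero, commutator_top_top, pow_one]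
  | succ i ih => rw [Subgroup.lowerCentralSeries_succ, ih, commutator_zpowers_r_top, ← pow_succ']

theorem lowerCentralSeries_two_pow_eq_bot {k : ℕ} (hk : k ≠ 0) :
    (⊤ : Subgroup (DihedralGroup (2 ^ k))).lowerCentralSeries k = ⊥ := by
  obtain ⟨j, rfl⟩ := Nat.exists_eq_succ_of_ne_zero hk
  have h : (2 : ZMod (2 ^ (j + 1))) ^ (j + 1) = 0 := by
    exact_mod_cast ZMod.natCast_self (2 ^ (j + 1))
  rw [lowerCentralSeries_top_succ, h, r_zero, zpowers_one_eq_bot]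

theorem lowerCentralSeries_two_pow_pred_ne_bot (k : ℕ) :
    (⊤ : Subgroup (DihedralGroup (2 ^ k))).lowerCentralSeries (k - 1) ≠ ⊥ := by
  match k with
  | 0 | 1 => exact top_ne_bot
  | j + 2 =>
    change (⊤ : Subgroup _).lowerCentralSeries (j + 1) ≠ ⊥
    rw [lowerCentralSeries_top_succ, Ne, zpowers_eq_bot, one_def, r.injEq]
    intro h
    have h' : ((2 ^ (j + 1) : ℕ) : ZMod (2 ^ (j + 2))) = 0 := by exact_mod_cast h
    rw [ZMod.natCast_eq_zero_iff, Nat.pow_dvd_pow_iff_le_right one_lt_two] at h'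
    omega

theorem r_mem_center_iff (i : ZMod n) : r i ∈ center (DihedralGroup n) ↔ 2 * i = 0 := by
  rw [mem_center_iff]
  constructor
  · intro h
    have h' := h (sr 0)
    rw [sr_mul_r, r_mul_sr, sr.injEq] at h'
    linear_combination h'
  · rintro h (j | j)
    · rw [r_mul_r, r_mul_r, add_comm]
    · rw [sr_mul_r, r_mul_sr, sr.injEq]
      linear_combination h

theorem sr_mem_center_iff (i : ZMod n) : sr i ∈ center (DihedralGroup n) ↔ (2 : ZMod n) = 0 := by
  rw [mem_center_iff]
  constructor
  · intro h
    have h' := h (r 1)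
    rw [sr_mul_r, r_mul_sr, sr.injEq] at h'
    linear_combination -h'
  · rintro h (j | j)
    · rw [sr_mul_r, r_mul_sr, sr.injEq]
      linear_combination -j * h
    · rw [sr_mul_sr, sr_mul_sr, r.injEq]
      linear_combination (i - j) * h

def castHom (h : m ∣ n) : DihedralGroup n →* DihedralGroup m where
  toFun
    | r i => r (ZMod.castHom h (ZMod m) i)
    | sr i => sr (ZMod.castHom h (ZMod m) i)
  map_one' := congrArg r (map_zero _)
  map_mul' := by
    rintro (a | a) (b | b) <;> simp only [r_mul_r, r_mul_sr, sr_mul_r, sr_mul_sr, map_add, map_sub]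

@[simp]
theorem castHom_r (h : m ∣ n) (i : ZMod n) : castHom h (r i) = r (ZMod.castHom h (ZMod m) i) :=
  rfl

@[simp]
theorem castHom_sr (h : m ∣ n) (i : ZMod n) : castHom h (sr i) = sr (ZMod.castHom h (ZMod m) i) :=
  rfl

theorem castHom_surjective (h : m ∣ n) : Function.Surjective (castHom h) := by
  have hZ := ZMod.ringHom_surjective (ZMod.castHom h (ZMod m))
  rintro (i | i) <;> obtain ⟨j, rfl⟩ := hZ i
  exacts [⟨r j, rfl⟩, ⟨sr j, rfl⟩]

theorem center_eq_ker_castHom (hm : m ≠ 1) :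
    center (DihedralGroup (2 * m)) = (castHom (dvd_mul_left m 2)).ker := by
  ext (i | i) <;> rw [MonoidHom.mem_ker, one_def]
  · rw [r_mem_center_iff, castHom_r, r.injEq, ZMod.castHom_eq_zero_iff_two_mul_eq_zero]
  · rw [sr_mem_center_iff, castHom_sr]
    exact iff_of_false (ZMod.two_ne_zero_of_ne_one hm) nofun

theorem nonempty_quotient_center_mulEquiv (hn : n = 2 * m) (hm : m ≠ 1) :
    Nonempty (DihedralGroup n ⧸ center (DihedralGroup n) ≃* DihedralGroup m) := by
  subst hn
  exact ⟨(QuotientGroup.quotientMulEquivOfEq (center_eq_ker_castHom hm)).trans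
    (QuotientGroup.quotientKerEquivOfSurjective _ (castHom_surjective _))⟩

theorem closure_sr_zero_r_one : closure {sr 0, r 1} = (⊤ : Subgroup (DihedralGroup n)) := by
  have hsr : sr 0 ∈ closure {sr 0, (r 1 : DihedralGroup n)} := subset_closure (by simp)
  have hr : r 1 ∈ closure {sr 0, (r 1 : DihedralGroup n)} := subset_closure (by simp)
  rw [eq_top_iff]
  rintro (i | i) - <;> obtain ⟨z, rfl⟩ := ZMod.intCast_surjective i
  · rw [← r_one_zpow]
    exact zpow_mem hr z
  · rw [← zero_add (z : ZMod n), ← sr_mul_r, ← r_one_zpow]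
    exact mul_mem hsr (zpow_mem hr z)

end DihedralGroup

/-- For every `k ≥ 1`, the central quotient of the dihedral group of order `2^{k+2}`
is the dihedral group of order `2^{k+1}`; hence the dihedral group of order `2^{k+1}`
is capable, has nilpotency class exactly `k`, and has a minimal generating set
consisting of an element of order `2` and an element of order `2^k`. -/
theorem dihedral_capable_class_k (k : ℕ) (hk : 1 ≤ k) :
    Nonempty ((DihedralGroup (2 ^ (k + 1)) ⧸ Subgroup.center (DihedralGroup (2 ^ (k + 1)))) ≃*
        DihedralGroup (2 ^ k)) ∧
    IsCapable (DihedralGroup (2 ^ k)) ∧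
    Subgroup.lowerCentralSeries (⊤ : Subgroup (DihedralGroup (2 ^ k))) k = ⊥ ∧
    Subgroup.lowerCentralSeries (⊤ : Subgroup (DihedralGroup (2 ^ k))) (k - 1) ≠ ⊥ ∧
    ∃ a b : DihedralGroup (2 ^ k), orderOf a = 2 ∧ orderOf b = 2 ^ k ∧
      Subgroup.closure ({a, b} : Set (DihedralGroup (2 ^ k))) = ⊤ ∧
      ∀ s : Set (DihedralGroup (2 ^ k)), s ⊂ {a, b} → Subgroup.closure s ≠ ⊤ := by
  have hk' : k ≠ 0 := Nat.one_le_iff_ne_zero.mp hk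
  have h2k : 2 ^ k ≠ 1 := (Nat.one_lt_two_pow hk').ne'
  have hquot := nonempty_quotient_center_mulEquiv (pow_succ' 2 k) h2k
  exact ⟨hquot, ⟨_, inferInstance, hquot⟩, lowerCentralSeries_two_pow_eq_bot hk',
    lowerCentralSeries_two_pow_pred_ne_bot k, sr 0, r 1, orderOf_sr 0, orderOf_r_one,
    closure_sr_zero_r_one, fun _ hs => closure_ne_top_of_ssubset_pair (not_isCyclic h2k) hs⟩
end

section
/- Let K be a group that is nilpotent of class at most 2, and let x_1, …, x_n ∈ K be elements such that K is generated by {x_1, …, x_n} together with its center Z(K). For each i let m_i denote the order of x_i·Z(K) in K/Z(K). Let g = x_1^{a_1} x_2^{a_2} ⋯ x_n^{a_n} for integers a_1, …, a_n, and assume that for each i and each j ≠ i there exists an integer b with b ≡ a_i (mod m_i) and gcd(m_i, m_j) ∣ b. Then g ∈ Z(K). -/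
/-!
In a group of class at most 2 every commutator is central, so `p ↦ ⁅p, q⁆` is a homomorphism
and `⁅p ^ a, q⁆ = ⁅p, q⁆ ^ a`. Since `p ^ m` is central for `m` the order of `p Z(K)`, the
order of `⁅x_i, x_j⁆` divides both `m_i` and `m_j`, hence `gcd(m_i, m_j)`, and the congruence
hypothesis then forces `⁅x_i, x_j⁆ ^ a_i = 1`. Thus every factor `x_i ^ a_i` of `g` commutes
with every generator `x_j`, and so `g` commutes with the whole group.
-/

open scoped commutatorElement

namespace Subgroup

variable {K : Type*} [Group K]

theorem commutatorElement_mem_center_of_lowerCentralSeries_two_eq_bot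
    (hnil : (⊤ : Subgroup K).lowerCentralSeries 2 = ⊥) (p q : K) : ⁅p, q⁆ ∈ center K := by
  rw [mem_center_iff]
  intro r
  have hpq : ⁅p, q⁆ ∈ (⊤ : Subgroup K).lowerCentralSeries 1 :=
    commutator_mem_commutator (mem_top p) (mem_top q)
  have hpqr : ⁅⁅p, q⁆, r⁆ ∈ (⊤ : Subgroup K).lowerCentralSeries 2 :=
    commutator_mem_commutator hpq (mem_top r)
  rw [hnil, mem_bot, commutatorElement_eq_one_iff_mul_comm] at hpqr
  exact hpqr.symm

theorem mem_center_of_closure_union_center_eq_top {S : Set K}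
    (hS : closure (S ∪ center K) = ⊤) {g : K} (hg : ∀ s ∈ S, Commute s g) :
    g ∈ center K := by
  rw [← centralizer_univ, ← coe_top, ← hS, centralizer_closure, mem_centralizer_iff]
  rintro s (hs | hs)
  · exact (hg s hs).eq
  · exact (mem_center_iff.mp hs g).symm

section CentralCommutators

variable (hc : ∀ p q : K, ⁅p, q⁆ ∈ center K)
include hc

theorem commutatorElement_mul_left_of_forall_mem_center (p p' q : K) :
    ⁅p * p', q⁆ = ⁅p, q⁆ * ⁅p', q⁆ := by
  rw [commutatorElement_mul_left_eq_conj_mul, mem_center_iff.mp (hc p' q) p, mul_inv_cancel_right,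
    mem_center_iff.mp (hc p' q)]

def commutatorElementLeftHom (q : K) : K →* K where
  toFun p := ⁅p, q⁆
  map_one' := commutatorElement_one_left q
  map_mul' p p' := commutatorElement_mul_left_of_forall_mem_center hc p p' q

theorem commutatorElement_zpow_left_of_forall_mem_center (p q : K) (k : ℤ) :
    ⁅p ^ k, q⁆ = ⁅p, q⁆ ^ k :=
  map_zpow (commutatorElementLeftHom hc q) p k

theorem orderOf_commutatorElement_dvd_orderOf_mk_left (p q : K) :
    orderOf ⁅p, q⁆ ∣ orderOf (p : K ⧸ center K) := by
  apply orderOf_dvd_of_pow_eq_one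
  have hpow : p ^ orderOf (p : K ⧸ center K) ∈ center K := by
    rw [← QuotientGroup.eq_one_iff, QuotientGroup.mk_pow, pow_orderOf_eq_one]
  rw [← zpow_natCast, ← commutatorElement_zpow_left_of_forall_mem_center hc, zpow_natCast,
    commutatorElement_eq_one_iff_commute]
  exact (mem_center_iff.mp hpow q).symm

theorem orderOf_commutatorElement_dvd_orderOf_mk_right (p q : K) :
    orderOf ⁅p, q⁆ ∣ orderOf (q : K ⧸ center K) := by
  rw [← orderOf_inv, commutatorElement_inv]
  exact orderOf_commutatorElement_dvd_orderOf_mk_left hc q p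

theorem commute_zpow_of_modEq_of_gcd_dvd (p q : K) {a b : ℤ}
    (hb : b ≡ a [ZMOD orderOf (p : K ⧸ center K)])
    (hgcd : (Nat.gcd (orderOf (p : K ⧸ center K)) (orderOf (q : K ⧸ center K)) : ℤ) ∣ b) :
    Commute (p ^ a) q := by
  have hleft : (orderOf ⁅p, q⁆ : ℤ) ∣ orderOf (p : K ⧸ center K) :=
    Int.natCast_dvd_natCast.mpr (orderOf_commutatorElement_dvd_orderOf_mk_left hc p q)
  have hgcd' : (orderOf ⁅p, q⁆ : ℤ) ∣ b :=
    (Int.natCast_dvd_natCast.mpr (Nat.dvd_gcd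
      (orderOf_commutatorElement_dvd_orderOf_mk_left hc p q)
      (orderOf_commutatorElement_dvd_orderOf_mk_right hc p q))).trans hgcd
  have ha : (orderOf ⁅p, q⁆ : ℤ) ∣ a := by
    simpa using dvd_add hgcd' (hleft.trans hb.dvd)
  rw [← commutatorElement_eq_one_iff_commute, commutatorElement_zpow_left_of_forall_mem_center hc]
  exact orderOf_dvd_iff_zpow_eq_one.mp ha

end CentralCommutators

end Subgroup

open Subgroup in
/-- In a group `K` of nilpotency class at most `2`, generated by `x_1, …, x_n`
together with its center, an element `g = x_1^{a_1} ⋯ x_n^{a_n}` is central provided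
that for each `i` and each `j ≠ i` there is an integer `b` with
`b ≡ a_i (mod m_i)` and `gcd(m_i, m_j) ∣ b`, where `m_i` is the order of `x_i Z(K)`
in `K/Z(K)`. -/
theorem mem_center_of_congruences
    (K : Type*) [Group K]
    (hnil : (⊤ : Subgroup K).lowerCentralSeries 2 = ⊥)
    (n : ℕ) (x : Fin n → K)
    (hgen : Subgroup.closure (Set.range x ∪ (Subgroup.center K : Set K)) = ⊤)
    (m : Fin n → ℕ)
    (hm : ∀ i, m i = orderOf (QuotientGroup.mk (x i) : K ⧸ Subgroup.center K))
    (a : Fin n → ℤ)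
    (hab : ∀ i j : Fin n, j ≠ i →
      ∃ b : ℤ, Int.ModEq (m i : ℤ) b (a i) ∧ ((Nat.gcd (m i) (m j) : ℤ)) ∣ b) :
    (((List.finRange n).map fun i => x i ^ a i).prod) ∈ Subgroup.center K := by
  have hc := commutatorElement_mem_center_of_lowerCentralSeries_two_eq_bot hnil
  refine mem_center_of_closure_union_center_eq_top hgen ?_
  rintro _ ⟨j, rfl⟩
  refine (Commute.list_prod_left _ _ ?_).symm
  simp only [List.mem_map, List.mem_finRange, true_and]
  rintro _ ⟨i, rfl⟩
  obtain rfl | hji := eq_or_ne j i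
  · exact (Commute.refl _).zpow_left _
  obtain ⟨b, hb, hgcd⟩ := hab i j hji
  rw [hm] at hb
  rw [hm, hm] at hgcd
  exact commute_zpow_of_modEq_of_gcd_dvd hc (x i) (x j) hb hgcd
end

section
/- Let p be an odd prime and let α, β, γ, σ be integers with β ≥ γ ≥ 1, α ≥ γ, α + σ ≥ 2γ, and 0 ≤ σ < γ. Let G be the group presented on two generators a, b by the relators a^{p^α}, b^{p^β}, [b,a]^{p^γ}, [a,b,a], [a,b,b], and a^{p^{α+σ-γ}}[b,a]^{p^σ} (for instance as a Mathlib PresentedGroup on FreeGroup (Fin 2) with these six relators). Then G is capable if and only if α = β. -/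
universe u

/-- The commutator `[x,y] = x⁻¹y⁻¹xy`. -/
def pcomm {G : Type*} [Group G] (x y : G) : G := x⁻¹ * y⁻¹ * x * y

/-- The six relators `a^{p^α}`, `b^{p^β}`, `[b,a]^{p^γ}`, `[a,b,a]`, `[a,b,b]`,
`a^{p^{α+σ-γ}}[b,a]^{p^σ}` in the free group on two generators. -/
def twoGenRels (p α β γ σ : ℕ) : Set (FreeGroup (Fin 2)) :=
  let a : FreeGroup (Fin 2) := FreeGroup.of 0
  let b : FreeGroup (Fin 2) := FreeGroup.of 1
  {a ^ p ^ α, b ^ p ^ β, pcomm b a ^ p ^ γ,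
   pcomm (pcomm a b) a, pcomm (pcomm a b) b,
   a ^ p ^ (α + σ - γ) * pcomm b a ^ p ^ σ}

/-!
If `G = H / Z(H)`, lift the generators `a, b` to `x, y ∈ H`. Then `[x,y,x]`, `[y,x,y]` and
`[x,y]^{p^γ}` are central, so `[x,y,x]^{p^γ} = 1`; as `p` is odd, `p^γ` divides `(p^e).choose 2`
for `e ≥ γ`, and `[x^n, y] = [x,y]^n [x,y,x]^(n.choose 2)` collapses to
`[x^{p^e}, y] = [x,y]^{p^e}`. Since `y^{p^β}` is central this gives `[x,y]^{p^β} = 1`, hence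
`x^{p^β}` is central, i.e. `a^{p^β} = 1`; symmetrically `b^{p^α} = 1`. In the model
`G ≅ Heisenberg ⧸ twoGenKernel` the orders of `a` and `b` are exactly `p^α` and `p^β`, so `α = β`.

Conversely, for `α = β` let `F` be the free nilpotent group of class three on `X, Y` and `K` the
normal subgroup generated by `[Y,X]^{p^{α+σ-γ}} [Y,X,Y]^{-p^σ}`, `[Y,X,X]^{p^σ}`, `[Y,X,Y]^{p^γ}`.
Computing `[g,X]` and `[g,Y]` in coordinates shows that the centre of `F ⧸ K` is exactly the
preimage of `twoGenKernel` under `F → Heisenberg`, so `(F ⧸ K) ⧸ Z(F ⧸ K) ≅ G`.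
-/

def choose2 (i : ℤ) : ℤ := i * (i - 1) / 2

theorem two_mul_choose2 (i : ℤ) : 2 * choose2 i = i * (i - 1) :=
  Int.mul_ediv_cancel' (Int.even_mul_pred_self i).two_dvd

@[simp] theorem choose2_zero : choose2 0 = 0 := rfl

@[simp] theorem choose2_one : choose2 1 = 0 := rfl

theorem choose2_add (i j : ℤ) : choose2 (i + j) = choose2 i + choose2 j + i * j := by
  apply mul_left_cancel₀ two_ne_zero
  rw [two_mul_choose2, mul_add, mul_add, two_mul_choose2, two_mul_choose2]; ring

theorem choose2_neg (i : ℤ) : choose2 (-i) = choose2 i + i := by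
  apply mul_left_cancel₀ two_ne_zero
  rw [two_mul_choose2, mul_add, two_mul_choose2]; ring

theorem Odd.dvd_choose2 {d i : ℤ} (hd : Odd d) (h : d ∣ i) : d ∣ choose2 i := by
  have h2 : d ∣ 2 * choose2 i := two_mul_choose2 i ▸ h.mul_right _
  exact (Int.isCoprime_two_right.2 hd).dvd_of_dvd_mul_left h2

theorem pow_dvd_mul_pow_iff {a k : ℤ} {m n : ℕ} (ha : a ≠ 0) (h : n ≤ m) :
    a ^ m ∣ k * a ^ n ↔ a ^ (m - n) ∣ k := by
  rw [show a ^ m = a ^ (m - n) * a ^ n by rw [← pow_add, Nat.sub_add_cancel h],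
    mul_dvd_mul_iff_right (pow_ne_zero n ha)]

theorem pow_dvd_choose_two {p γ e : ℕ} (hodd : Odd p) (h : γ ≤ e) :
    p ^ γ ∣ (p ^ e).choose 2 := by
  rw [Nat.choose_two_right, Nat.mul_div_assoc _ (Nat.Odd.sub_odd hodd.pow odd_one).two_dvd]
  exact (pow_dvd_pow p h).mul_right _

section Commutator

variable {G : Type*} [Group G]

theorem pcomm_eq_one_iff {x y : G} : pcomm x y = 1 ↔ Commute x y := by
  rw [show pcomm x y = (y * x)⁻¹ * (x * y) by simp only [pcomm]; group, inv_mul_eq_one]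
  exact eq_comm

theorem inv_pcomm (x y : G) : (pcomm x y)⁻¹ = pcomm y x := by
  simp only [pcomm]; group

theorem mul_mul_pcomm (x y : G) : y * x * pcomm x y = x * y := by
  simp only [pcomm]; group

theorem map_pcomm {H F : Type*} [Group H] [FunLike F G H] [MonoidHomClass F G H] (f : F)
    (x y : G) : f (pcomm x y) = pcomm (f x) (f y) := by
  simp [pcomm]

theorem inv_mul_zpow_mul {u x : G} (h : Commute (pcomm u x) u) (k : ℤ) :
    x⁻¹ * u ^ k * x = u ^ k * pcomm u x ^ k := by
  have hconj : x⁻¹ * u * x = u * pcomm u x := by simp only [pcomm]; group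
  rw [← h.symm.mul_zpow, ← hconj]
  simpa using (conj_zpow (a := x⁻¹) (b := u) (i := k)).symm

theorem pcomm_zpow_left {u x : G} (h : Commute (pcomm u x) u) (k : ℤ) :
    pcomm (u ^ k) x = pcomm u x ^ k := by
  calc pcomm (u ^ k) x = (u ^ k)⁻¹ * (x⁻¹ * u ^ k * x) := by simp only [pcomm]; group
    _ = pcomm u x ^ k := by rw [inv_mul_zpow_mul h, inv_mul_cancel_left]

theorem pcomm_pow_left {x y : G} (ht : pcomm (pcomm x y) x ∈ Subgroup.center G) (n : ℕ) :
    pcomm (x ^ n) y = pcomm x y ^ n * pcomm (pcomm x y) x ^ n.choose 2 := by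
  set u := pcomm x y
  set t := pcomm u x
  have htc : ∀ g : G, Commute t g := fun g => (Subgroup.mem_center_iff.1 ht g).symm
  induction n with
  | zero => simp [pcomm]
  | succ n ih =>
    have hconj : x⁻¹ * u ^ n * x = u ^ n * t ^ n := by
      exact_mod_cast inv_mul_zpow_mul (htc u) n
    calc pcomm (x ^ (n + 1)) y = x⁻¹ * pcomm (x ^ n) y * x * u := by
          rw [pow_succ]; simp only [u, pcomm]; group
      _ = (x⁻¹ * u ^ n * x) * t ^ n.choose 2 * u := by
          rw [ih, ← mul_assoc x⁻¹, mul_assoc _ (t ^ _) x, ((htc x).pow_left _).eq, ← mul_assoc]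
      _ = u ^ (n + 1) * t ^ (n + 1).choose 2 := by
          rw [hconj, Nat.choose_succ_succ', Nat.choose_one_right, pow_add, pow_succ,
            mul_assoc, mul_assoc, ((htc u).pow_left _).eq, ← mul_assoc (t ^ n),
            ((htc u).pow_left _).eq]
          group

theorem pcomm_zpow_zpow {a b : G} (hca : Commute (pcomm b a) a)
    (hcb : Commute (pcomm b a) b) (i j : ℤ) : pcomm (b ^ j) (a ^ i) = pcomm b a ^ (j * i) := by
  have hb : pcomm a (b ^ j) = (pcomm b a ^ j)⁻¹ := by rw [← inv_pcomm, pcomm_zpow_left hcb]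
  have ha : Commute (pcomm a (b ^ j)) a := by rw [hb]; exact (hca.zpow_left j).inv_left
  rw [← inv_pcomm, pcomm_zpow_left ha, hb]
  group

end Commutator

section CentralQuotient

variable {G : Type*} [Group G]

theorem mem_center_of_forall_commute {s : Set G}
    (hs : Subgroup.closure s ⊔ Subgroup.center G = ⊤) {g : G} (hg : ∀ h ∈ s, Commute g h) :
    g ∈ Subgroup.center G := by
  have hle : Subgroup.closure s ⊔ Subgroup.center G ≤ Subgroup.centralizer {g} :=
    sup_le ((Subgroup.closure_le _).2 fun h hh => Subgroup.mem_centralizer_singleton_iff.2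
      (hg h hh).symm.eq) (Subgroup.center_le_centralizer _)
  rw [hs, top_le_iff, Subgroup.centralizer_eq_top_iff_subset] at hle
  exact hle rfl

theorem pcomm_pow_left_eq_pow {x y : G} {m n : ℕ}
    (ht : pcomm (pcomm x y) x ∈ Subgroup.center G) (hm : pcomm x y ^ m ∈ Subgroup.center G)
    (hmn : m ∣ n.choose 2) : pcomm (x ^ n) y = pcomm x y ^ n := by
  have htm : pcomm (pcomm x y) x ^ m = 1 := by
    rw [← zpow_natCast, ← pcomm_zpow_left (Subgroup.mem_center_iff.1 ht _).symm, zpow_natCast,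
      pcomm_eq_one_iff]
    exact (Subgroup.mem_center_iff.1 hm x).symm
  obtain ⟨c, hc⟩ := hmn
  rw [pcomm_pow_left ht, hc, pow_mul, htm, one_pow, mul_one]

theorem pow_mem_center_of_pow_mem_center {x y : G} {m n : ℕ}
    (hgen : Subgroup.closure {x, y} ⊔ Subgroup.center G = ⊤)
    (hx : pcomm (pcomm x y) x ∈ Subgroup.center G) (hy : pcomm (pcomm y x) y ∈ Subgroup.center G)
    (hm : pcomm x y ^ m ∈ Subgroup.center G) (hmn : m ∣ n.choose 2)
    (hyn : y ^ n ∈ Subgroup.center G) : x ^ n ∈ Subgroup.center G := by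
  have hm' : pcomm y x ^ m ∈ Subgroup.center G := by
    rw [← inv_pcomm, inv_pow]; exact inv_mem hm
  have hyx : pcomm y x ^ n = 1 := by
    rw [← pcomm_pow_left_eq_pow hy hm' hmn, pcomm_eq_one_iff]
    exact (Subgroup.mem_center_iff.1 hyn x).symm
  have hxy : pcomm (x ^ n) y = 1 := by
    rw [pcomm_pow_left_eq_pow hx hm hmn, ← inv_pcomm, inv_pow, hyx, inv_one]
  refine mem_center_of_forall_commute hgen ?_
  rintro h (rfl | rfl)
  exacts [(Commute.refl h).pow_left n, pcomm_eq_one_iff.1 hxy]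

theorem IsCapable.pow_eq_one_of_pow_eq_one {G : Type u} [Group G] (hG : IsCapable G)
    {a b : G} {m n : ℕ} (hgen : Subgroup.closure {a, b} = ⊤)
    (ha : pcomm (pcomm a b) a = 1) (hb : pcomm (pcomm b a) b = 1)
    (hm : pcomm a b ^ m = 1) (hmn : m ∣ n.choose 2) (hbn : b ^ n = 1) : a ^ n = 1 := by
  obtain ⟨H, _, ⟨φ⟩⟩ := hG
  set π : H →* G := φ.toMonoidHom.comp (QuotientGroup.mk' (Subgroup.center H))
  have hπ : Function.Surjective π := φ.surjective.comp (QuotientGroup.mk'_surjective _)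
  have hker : ∀ w, π w = 1 ↔ w ∈ Subgroup.center H := by
    intro w
    simp [π, QuotientGroup.eq_one_iff]
  obtain ⟨x, rfl⟩ := hπ a
  obtain ⟨y, rfl⟩ := hπ b
  have hgenH : Subgroup.closure {x, y} ⊔ Subgroup.center H = ⊤ := by
    have hkerπ : π.ker = Subgroup.center H := by ext w; exact hker w
    have := congrArg (Subgroup.comap π) hgen
    rwa [← Set.image_pair, ← MonoidHom.map_closure, Subgroup.comap_map_eq, hkerπ,
      Subgroup.comap_top] at this
  simp only [← map_pow, ← map_pcomm, hker] at ha hb hm hbn ⊢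
  exact pow_mem_center_of_pow_mem_center hgenH ha hb hm hmn hbn

theorem isCapable_of_surjective {H G : Type u} [Group H] [Group G] (f : H →* G)
    (hf : Function.Surjective f) (hker : f.ker = Subgroup.center H) : IsCapable G :=
  ⟨H, inferInstance, ⟨(QuotientGroup.quotientMulEquivOfEq hker.symm).trans
    (QuotientGroup.quotientKerEquivOfSurjective f hf)⟩⟩

end CentralQuotient

/-- `⟨x, y, z⟩` stands for `A ^ x * B ^ y * [B, A] ^ z`. -/
@[ext] structure Heisenberg where
  x : ℤ
  y : ℤ
  z : ℤ

namespace Heisenberg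

instance : Mul Heisenberg := ⟨fun g h => ⟨g.x + h.x, g.y + h.y, g.z + h.z + g.y * h.x⟩⟩
instance : One Heisenberg := ⟨⟨0, 0, 0⟩⟩
instance : Inv Heisenberg := ⟨fun g => ⟨-g.x, -g.y, g.x * g.y - g.z⟩⟩

@[simp] theorem mul_def (g h : Heisenberg) :
    g * h = ⟨g.x + h.x, g.y + h.y, g.z + h.z + g.y * h.x⟩ := rfl
@[simp] theorem one_def : (1 : Heisenberg) = ⟨0, 0, 0⟩ := rfl
@[simp] theorem inv_def (g : Heisenberg) : g⁻¹ = ⟨-g.x, -g.y, g.x * g.y - g.z⟩ := rfl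

instance : Group Heisenberg where
  mul_assoc a b c := by (ext <;> simp) <;> ring
  one_mul a := by ext <;> simp
  mul_one a := by ext <;> simp
  inv_mul_cancel a := by ext <;> simp; ring

def A : Heisenberg := ⟨1, 0, 0⟩
def B : Heisenberg := ⟨0, 1, 0⟩

theorem mk_x_zero_z_zpow (x z k : ℤ) : (⟨x, 0, z⟩ : Heisenberg) ^ k = ⟨k * x, 0, k * z⟩ := by
  induction k using Int.induction_on with
  | zero => ext <;> simp
  | succ n ih => rw [zpow_add_one, ih]; (ext <;> simp) <;> ring
  | pred n ih => rw [zpow_sub_one, ih]; (ext <;> simp) <;> ring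

theorem mk_zero_y_zero_zpow (y k : ℤ) : (⟨0, y, 0⟩ : Heisenberg) ^ k = ⟨0, k * y, 0⟩ := by
  induction k using Int.induction_on with
  | zero => ext <;> simp
  | succ n ih => rw [zpow_add_one, ih]; ext <;> simp; ring
  | pred n ih => rw [zpow_sub_one, ih]; ext <;> simp; ring

theorem pcomm_B_A : pcomm B A = ⟨0, 0, 1⟩ := by ext <;> simp [pcomm, A, B]

theorem pcomm_B_A_mem_center : pcomm B A ∈ Subgroup.center Heisenberg := by
  rw [Subgroup.mem_center_iff, pcomm_B_A]; intro g; ext <;> simp; ring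

theorem eq_A_zpow_mul_B_zpow_mul (g : Heisenberg) :
    g = A ^ g.x * B ^ g.y * pcomm B A ^ g.z := by
  rw [pcomm_B_A, A, B, mk_x_zero_z_zpow, mk_zero_y_zero_zpow, mk_x_zero_z_zpow]; ext <;> simp

theorem closure_A_B : Subgroup.closure {A, B} = ⊤ := by
  refine eq_top_iff.2 fun g _ => ?_
  have hA : A ∈ Subgroup.closure {A, B} := Subgroup.subset_closure (by simp)
  have hB : B ∈ Subgroup.closure {A, B} := Subgroup.subset_closure (by simp)
  have hC : pcomm B A ∈ Subgroup.closure {A, B} :=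
    mul_mem (mul_mem (mul_mem (inv_mem hB) (inv_mem hA)) hB) hA
  rw [eq_A_zpow_mul_B_zpow_mul g]
  exact mul_mem (mul_mem (zpow_mem hA _) (zpow_mem hB _)) (zpow_mem hC _)

theorem hom_ext {K : Type*} [Group K] {f g : Heisenberg →* K} (hA : f A = g A)
    (hB : f B = g B) : f = g :=
  MonoidHom.eq_of_eqOn_dense closure_A_B (by rintro _ (rfl | rfl) <;> assumption)

section Lift

variable {K : Type*} [Group K] {a b : K}

def lift (hca : Commute (pcomm b a) a) (hcb : Commute (pcomm b a) b) : Heisenberg →* K where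
  toFun g := a ^ g.x * b ^ g.y * pcomm b a ^ g.z
  map_one' := by simp
  map_mul' g h := by
    set c := pcomm b a
    have hex : b ^ g.y * a ^ h.x = a ^ h.x * b ^ g.y * c ^ (g.y * h.x) := by
      rw [← pcomm_zpow_zpow hca hcb, mul_mul_pcomm]
    have hcab : Commute (c ^ g.z) (a ^ h.x * b ^ h.y) :=
      (hca.zpow_zpow _ _).mul_right (hcb.zpow_zpow _ _)
    calc a ^ (g.x + h.x) * b ^ (g.y + h.y) * c ^ (g.z + h.z + g.y * h.x)
        = a ^ g.x * a ^ h.x * b ^ g.y * (b ^ h.y * c ^ (g.y * h.x)) * (c ^ g.z * c ^ h.z) := by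
          group
      _ = a ^ g.x * (a ^ h.x * b ^ g.y * c ^ (g.y * h.x)) * b ^ h.y * (c ^ g.z * c ^ h.z) := by
          rw [((hcb.zpow_zpow _ _).eq).symm]; group
      _ = a ^ g.x * b ^ g.y * (c ^ g.z * (a ^ h.x * b ^ h.y)) * c ^ h.z := by
          rw [← hex, hcab.eq]; group
      _ = a ^ g.x * b ^ g.y * c ^ g.z * (a ^ h.x * b ^ h.y * c ^ h.z) := by group

variable (hca : Commute (pcomm b a) a) (hcb : Commute (pcomm b a) b)

theorem lift_apply (g : Heisenberg) : lift hca hcb g = a ^ g.x * b ^ g.y * pcomm b a ^ g.z := rfl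

@[simp] theorem lift_A : lift hca hcb A = a := by simp [lift, A]
@[simp] theorem lift_B : lift hca hcb B = b := by simp [lift, B]

end Lift

theorem conj_def (c g : Heisenberg) :
    c * g * c⁻¹ = ⟨g.x, g.y, g.z + c.y * g.x - g.y * c.x⟩ := by
  ext <;> simp; ring

@[simp] theorem A_pow (n : ℕ) : A ^ n = ⟨n, 0, 0⟩ := by
  rw [← zpow_natCast, A, mk_x_zero_z_zpow]; ext <;> simp

@[simp] theorem B_pow (n : ℕ) : B ^ n = ⟨0, n, 0⟩ := by
  rw [← zpow_natCast, B, mk_zero_y_zero_zpow]; ext <;> simp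

@[simp] theorem pcomm_B_A_pow (n : ℕ) : pcomm B A ^ n = ⟨0, 0, n⟩ := by
  rw [← zpow_natCast, pcomm_B_A, mk_x_zero_z_zpow]; ext <;> simp

theorem pcomm_pcomm_A_B (g : Heisenberg) : pcomm (pcomm A B) g = 1 := by
  rw [pcomm_eq_one_iff, ← inv_pcomm]
  exact (Subgroup.mem_center_iff.1 (inv_mem pcomm_B_A_mem_center) g).symm

end Heisenberg

/-- Generated by the images of the relators `a^{p^{α+σ-γ}}[b,a]^{p^σ}`, `b^{p^β}`, `[b,a]^{p^γ}`;
the images of the other three relators follow. -/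
def twoGenKernel (p α β γ σ : ℕ) : Subgroup Heisenberg :=
  Subgroup.normalClosure {⟨(p : ℤ) ^ (α + σ - γ), 0, (p : ℤ) ^ σ⟩, ⟨0, (p : ℤ) ^ β, 0⟩,
    ⟨0, 0, (p : ℤ) ^ γ⟩}

instance (p α β γ σ : ℕ) : (twoGenKernel p α β γ σ).Normal := Subgroup.normalClosure_normal

section TwoGenKernel

variable {p α β γ σ : ℕ} {g : Heisenberg}

theorem coords_of_mem_twoGenKernel (hγβ : γ ≤ β) (hγμ : γ ≤ α + σ - γ)
    (hg : g ∈ twoGenKernel p α β γ σ) :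
    (∃ k, g.x = (p : ℤ) ^ (α + σ - γ) * k ∧ (p : ℤ) ^ γ ∣ g.z - k * (p : ℤ) ^ σ) ∧
      (p : ℤ) ^ β ∣ g.y := by
  set M := (p : ℤ) ^ (α + σ - γ)
  set S := (p : ℤ) ^ σ
  set Q := (p : ℤ) ^ γ
  set R := (p : ℤ) ^ β
  have hQR : Q ∣ R := pow_dvd_pow _ hγβ
  have hQM : Q ∣ M := pow_dvd_pow _ hγμ
  rw [twoGenKernel, Subgroup.normalClosure] at hg
  induction hg using Subgroup.closure_induction with
  | mem g hg =>
    obtain ⟨w, hw, hwg⟩ := Group.mem_conjugatesOfSet_iff.1 hg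
    obtain ⟨c, rfl⟩ := isConj_iff.1 hwg
    obtain ⟨⟨k, hk, hz⟩, hy⟩ : (∃ k, w.x = M * k ∧ Q ∣ w.z - k * S) ∧ R ∣ w.y := by
      rcases hw with rfl | rfl | rfl
      · exact ⟨⟨1, by simp [M], by simp [S]⟩, by simp⟩
      · exact ⟨⟨0, by simp, by simp⟩, by simp [R]⟩
      · exact ⟨⟨0, by simp, by simp [Q]⟩, by simp⟩
    have hz' : w.z + c.y * w.x - w.y * c.x - k * S = (w.z - k * S) + c.y * w.x - w.y * c.x := by
      ring
    rw [Heisenberg.conj_def]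
    refine ⟨⟨k, hk, ?_⟩, hy⟩
    rw [hz']
    exact dvd_sub (dvd_add hz (hk ▸ (hQM.mul_right k).mul_left c.y))
      (hQR.trans (hy.mul_right c.x))
  | one => exact ⟨⟨0, by simp, by simp⟩, by simp⟩
  | mul g h _ _ hg hh =>
    obtain ⟨⟨k, hk, hz⟩, hy⟩ := hg
    obtain ⟨⟨k', hk', hz'⟩, hy'⟩ := hh
    have hz'' : (g * h).z - (k + k') * S = (g.z - k * S) + (h.z - k' * S) + g.y * h.x := by
      simp; ring
    refine ⟨⟨k + k', by simp [hk, hk']; ring, ?_⟩, by simpa using dvd_add hy hy'⟩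
    rw [hz'']
    exact dvd_add (dvd_add hz hz') (hQR.trans (hy.mul_right _))
  | inv g _ hg =>
    obtain ⟨⟨k, hk, hz⟩, hy⟩ := hg
    refine ⟨⟨-k, by simp [hk], ?_⟩, by simpa using hy⟩
    rw [show g⁻¹.z - -k * S = g.x * g.y - (g.z - k * S) by simp; ring]
    exact dvd_sub (hQR.trans (hy.mul_left _)) hz

theorem mem_twoGenKernel_of_coords {k : ℤ} (hx : g.x = (p : ℤ) ^ (α + σ - γ) * k)
    (hz : (p : ℤ) ^ γ ∣ g.z - k * (p : ℤ) ^ σ) (hy : (p : ℤ) ^ β ∣ g.y) :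
    g ∈ twoGenKernel p α β γ σ := by
  obtain ⟨t, ht⟩ := hz
  obtain ⟨c, hc⟩ := hy
  have hmem : ∀ w ∈ ({⟨(p : ℤ) ^ (α + σ - γ), 0, (p : ℤ) ^ σ⟩, ⟨0, (p : ℤ) ^ β, 0⟩,
      ⟨0, 0, (p : ℤ) ^ γ⟩} : Set Heisenberg), w ∈ twoGenKernel p α β γ σ :=
    fun w hw => Subgroup.subset_normalClosure hw
  have hg : g = (⟨(p : ℤ) ^ (α + σ - γ), 0, (p : ℤ) ^ σ⟩ : Heisenberg) ^ k *
      (⟨0, 0, (p : ℤ) ^ γ⟩ : Heisenberg) ^ t * (⟨0, (p : ℤ) ^ β, 0⟩ : Heisenberg) ^ c := by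
    rw [Heisenberg.mk_x_zero_z_zpow, Heisenberg.mk_x_zero_z_zpow, Heisenberg.mk_zero_y_zero_zpow]
    ext <;> simp <;> linarith
  rw [hg]
  exact mul_mem (mul_mem (zpow_mem (hmem _ (by simp)) _) (zpow_mem (hmem _ (by simp)) _))
    (zpow_mem (hmem _ (by simp)) _)

theorem mem_twoGenKernel_iff (hγβ : γ ≤ β) (hγμ : γ ≤ α + σ - γ) :
    g ∈ twoGenKernel p α β γ σ ↔
      (∃ k, g.x = (p : ℤ) ^ (α + σ - γ) * k ∧ (p : ℤ) ^ γ ∣ g.z - k * (p : ℤ) ^ σ) ∧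
        (p : ℤ) ^ β ∣ g.y :=
  ⟨coords_of_mem_twoGenKernel hγβ hγμ, fun ⟨⟨_, hx, hz⟩, hy⟩ => mem_twoGenKernel_of_coords hx hz hy⟩

end TwoGenKernel

theorem twoGenRels_relations (p α β γ σ : ℕ) :
    let a : PresentedGroup (twoGenRels p α β γ σ) := .of 0
    let b : PresentedGroup (twoGenRels p α β γ σ) := .of 1
    a ^ p ^ α = 1 ∧ b ^ p ^ β = 1 ∧ pcomm b a ^ p ^ γ = 1 ∧ pcomm (pcomm a b) a = 1 ∧
      pcomm (pcomm a b) b = 1 ∧ a ^ p ^ (α + σ - γ) * pcomm b a ^ p ^ σ = 1 := by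
  have h := fun r (hr : r ∈ twoGenRels p α β γ σ) => PresentedGroup.one_of_mem hr
  simp only [twoGenRels, Set.mem_insert_iff, Set.mem_singleton_iff, forall_eq_or_imp,
    forall_eq] at h
  exact h

section TwoGenEquiv

variable {p α β γ σ : ℕ}

theorem lift_mem_twoGenKernel (hσγ : σ ≤ γ) (hασ : 2 * γ ≤ α + σ) :
    ∀ r ∈ twoGenRels p α β γ σ,
      FreeGroup.lift ![Heisenberg.A, Heisenberg.B] r ∈ twoGenKernel p α β γ σ := by
  have hpow : (p : ℤ) ^ α = (p : ℤ) ^ (α + σ - γ) * (p : ℤ) ^ (γ - σ) := by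
    rw [← pow_add]; congr 1; omega
  have hγ : (p : ℤ) ^ γ = (p : ℤ) ^ (γ - σ) * (p : ℤ) ^ σ := by
    rw [← pow_add]; congr 1; omega
  simp only [twoGenRels, Set.mem_insert_iff, Set.mem_singleton_iff, forall_eq_or_imp, forall_eq,
    map_pow, map_mul, map_pcomm, FreeGroup.lift_apply_of]
  simp only [Matrix.cons_val_zero, Matrix.cons_val_one, Heisenberg.A_pow, Heisenberg.B_pow,
    Heisenberg.pcomm_B_A_pow, Heisenberg.pcomm_pcomm_A_B, Heisenberg.mul_def]
  refine ⟨?_, Subgroup.subset_normalClosure (by simp), Subgroup.subset_normalClosure (by simp),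
    one_mem _, one_mem _, Subgroup.subset_normalClosure (by simp)⟩
  exact mem_twoGenKernel_of_coords (k := (p : ℤ) ^ (γ - σ)) (by push_cast; exact hpow)
    (by simp [hγ]) (dvd_zero _)

def twoGenToHeisenberg (hσγ : σ ≤ γ) (hασ : 2 * γ ≤ α + σ) :
    PresentedGroup (twoGenRels p α β γ σ) →* Heisenberg ⧸ twoGenKernel p α β γ σ :=
  PresentedGroup.toGroup (f := QuotientGroup.mk' _ ∘ ![Heisenberg.A, Heisenberg.B]) fun r hr => by
    rw [← FreeGroup.lift_unique
        ((QuotientGroup.mk' _).comp (FreeGroup.lift ![Heisenberg.A, Heisenberg.B])) (by simp),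
      MonoidHom.comp_apply, QuotientGroup.mk'_apply, QuotientGroup.eq_one_iff]
    exact lift_mem_twoGenKernel hσγ hασ r hr

section

variable (hσγ : σ ≤ γ) (hασ : 2 * γ ≤ α + σ)

@[simp] theorem twoGenToHeisenberg_of_zero :
    twoGenToHeisenberg hσγ hασ (.of 0) = (Heisenberg.A : Heisenberg ⧸ twoGenKernel p α β γ σ) :=
  PresentedGroup.toGroup.of _

@[simp] theorem twoGenToHeisenberg_of_one :
    twoGenToHeisenberg hσγ hασ (.of 1) = (Heisenberg.B : Heisenberg ⧸ twoGenKernel p α β γ σ) :=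
  PresentedGroup.toGroup.of _

end

theorem twoGen_commute_pcomm_of (p α β γ σ : ℕ) (i : Fin 2) :
    Commute (pcomm (.of 1) (.of 0) : PresentedGroup (twoGenRels p α β γ σ)) (.of i) := by
  obtain ⟨-, -, -, hab, hba, -⟩ := twoGenRels_relations p α β γ σ
  rw [← inv_pcomm]
  fin_cases i
  exacts [(pcomm_eq_one_iff.1 hab).inv_left, (pcomm_eq_one_iff.1 hba).inv_left]

def heisenbergToTwoGen (p α β γ σ : ℕ) :
    Heisenberg ⧸ twoGenKernel p α β γ σ →* PresentedGroup (twoGenRels p α β γ σ) :=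
  QuotientGroup.lift _ (Heisenberg.lift (twoGen_commute_pcomm_of p α β γ σ 0)
      (twoGen_commute_pcomm_of p α β γ σ 1)) <| by
    obtain ⟨-, hb, hc, -, -, hμσ⟩ := twoGenRels_relations p α β γ σ
    refine Subgroup.normalClosure_le_normal ?_
    rintro g (rfl | rfl | rfl) <;>
      simpa only [SetLike.mem_coe, MonoidHom.mem_ker, Heisenberg.lift_apply, zpow_zero, mul_one,
        one_mul, ← Nat.cast_pow, zpow_natCast]

noncomputable def twoGenEquiv (hσγ : σ ≤ γ) (hασ : 2 * γ ≤ α + σ) :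
    PresentedGroup (twoGenRels p α β γ σ) ≃* Heisenberg ⧸ twoGenKernel p α β γ σ :=
  MonoidHom.toMulEquiv (twoGenToHeisenberg hσγ hασ) (heisenbergToTwoGen p α β γ σ)
    (PresentedGroup.ext fun i => by fin_cases i <;> simp [heisenbergToTwoGen])
    (QuotientGroup.monoidHom_ext _ (Heisenberg.hom_ext (by simp [heisenbergToTwoGen])
      (by simp [heisenbergToTwoGen])))

end TwoGenEquiv

/-- `⟨i, j, l, m, n⟩` stands for `X ^ i * Y ^ j * C ^ l * D ^ m * E ^ n`, where `C = [Y, X]`,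
`D = [C, X]` and `E = [C, Y]`. -/
@[ext] structure FreeClassThree where
  i : ℤ
  j : ℤ
  l : ℤ
  m : ℤ
  n : ℤ

namespace FreeClassThree

instance : Mul FreeClassThree := ⟨fun g h =>
  ⟨g.i + h.i, g.j + h.j, g.l + h.l + g.j * h.i,
   g.m + h.m + g.l * h.i + g.j * choose2 h.i,
   g.n + h.n + g.l * h.j + h.i * g.j * h.j + h.i * choose2 g.j⟩⟩
instance : One FreeClassThree := ⟨⟨0, 0, 0, 0, 0⟩⟩
instance : Inv FreeClassThree := ⟨fun g =>
  ⟨-g.i, -g.j, g.i * g.j - g.l,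
   -(g.m - g.l * g.i + g.j * choose2 (-g.i)),
   -(g.n - g.l * g.j + g.i * g.j * g.j - g.i * choose2 g.j)⟩⟩

@[simp] theorem mul_def (g h : FreeClassThree) : g * h =
    ⟨g.i + h.i, g.j + h.j, g.l + h.l + g.j * h.i,
     g.m + h.m + g.l * h.i + g.j * choose2 h.i,
     g.n + h.n + g.l * h.j + h.i * g.j * h.j + h.i * choose2 g.j⟩ := rfl
@[simp] theorem one_def : (1 : FreeClassThree) = ⟨0, 0, 0, 0, 0⟩ := rfl
@[simp] theorem inv_def (g : FreeClassThree) : g⁻¹ =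
    ⟨-g.i, -g.j, g.i * g.j - g.l,
     -(g.m - g.l * g.i + g.j * choose2 (-g.i)),
     -(g.n - g.l * g.j + g.i * g.j * g.j - g.i * choose2 g.j)⟩ := rfl

instance : Group FreeClassThree where
  mul_assoc a b c := by ext <;> simp [choose2_add] <;> ring
  one_mul a := by ext <;> simp
  mul_one a := by ext <;> simp
  inv_mul_cancel a := by
    ext <;> simp [choose2_neg]
    · ring
    · linear_combination (-a.j) * two_mul_choose2 a.i
    · linear_combination a.i * two_mul_choose2 a.j

def X : FreeClassThree := ⟨1, 0, 0, 0, 0⟩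
def Y : FreeClassThree := ⟨0, 1, 0, 0, 0⟩

theorem X_zpow (k : ℤ) : X ^ k = ⟨k, 0, 0, 0, 0⟩ := by
  induction k using Int.induction_on with
  | zero => rfl
  | succ n ih => rw [zpow_add_one, ih]; ext <;> simp [X]
  | pred n ih => rw [zpow_sub_one, ih]; ext <;> simp [X, choose2_neg]; ring

theorem Y_zpow (k : ℤ) : Y ^ k = ⟨0, k, 0, 0, 0⟩ := by
  induction k using Int.induction_on with
  | zero => rfl
  | succ n ih => rw [zpow_add_one, ih]; ext <;> simp [Y]
  | pred n ih => rw [zpow_sub_one, ih]; ext <;> simp [Y]; ring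

theorem mk_zero_zero_l_m_n_zpow (l m n k : ℤ) :
    (⟨0, 0, l, m, n⟩ : FreeClassThree) ^ k = ⟨0, 0, k * l, k * m, k * n⟩ := by
  induction k using Int.induction_on with
  | zero => ext <;> simp
  | succ q ih => rw [zpow_add_one, ih]; (ext <;> simp) <;> ring
  | pred q ih => rw [zpow_sub_one, ih]; (ext <;> simp) <;> ring

theorem pcomm_X (g : FreeClassThree) : pcomm g X = ⟨0, 0, g.j, g.l, choose2 g.j⟩ := by
  ext <;> simp [pcomm, X, choose2_neg]
  · ring
  · linear_combination (-g.j) * two_mul_choose2 g.i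
  · linear_combination (g.i - 1) * two_mul_choose2 g.j

theorem pcomm_Y (g : FreeClassThree) :
    pcomm g Y = ⟨0, 0, -g.i, -choose2 g.i, g.l - g.i * g.j⟩ := by
  ext <;> simp [pcomm, Y, choose2_add, choose2_neg]
  · ring
  · linear_combination (-g.j) * two_mul_choose2 g.i
  · linear_combination g.i * two_mul_choose2 g.j

theorem closure_X_Y : Subgroup.closure {X, Y} = ⊤ := by
  refine eq_top_iff.2 fun g _ => ?_
  set S := Subgroup.closure {X, Y}
  have hX : X ∈ S := Subgroup.subset_closure (by simp)
  have hY : Y ∈ S := Subgroup.subset_closure (by simp)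
  have hpcomm : ∀ {u v : FreeClassThree}, u ∈ S → v ∈ S → pcomm u v ∈ S := fun hu hv =>
    mul_mem (mul_mem (mul_mem (inv_mem hu) (inv_mem hv)) hu) hv
  have hC : (⟨0, 0, 1, 0, 0⟩ : FreeClassThree) ∈ S := by simpa [pcomm_X, Y] using hpcomm hY hX
  have hD : (⟨0, 0, 0, 1, 0⟩ : FreeClassThree) ∈ S := by simpa [pcomm_X] using hpcomm hC hX
  have hE : (⟨0, 0, 0, 0, 1⟩ : FreeClassThree) ∈ S := by simpa [pcomm_Y] using hpcomm hC hY
  have hg : g = X ^ g.i * Y ^ g.j * (⟨0, 0, 1, 0, 0⟩ : FreeClassThree) ^ g.l *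
      (⟨0, 0, 0, 1, 0⟩ : FreeClassThree) ^ g.m * (⟨0, 0, 0, 0, 1⟩ : FreeClassThree) ^ g.n := by
    rw [X_zpow, Y_zpow, mk_zero_zero_l_m_n_zpow, mk_zero_zero_l_m_n_zpow, mk_zero_zero_l_m_n_zpow]
    ext <;> simp
  rw [hg]
  exact mul_mem (mul_mem (mul_mem (mul_mem (zpow_mem hX _) (zpow_mem hY _)) (zpow_mem hC _))
    (zpow_mem hD _)) (zpow_mem hE _)

theorem conj_mk_zero_zero (g : FreeClassThree) (l m n : ℤ) :
    g * ⟨0, 0, l, m, n⟩ * g⁻¹ = ⟨0, 0, l, m - l * g.i, n - l * g.j⟩ := by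
  ext <;> simp [choose2_neg] <;> ring

def toHeisenberg : FreeClassThree →* Heisenberg where
  toFun g := ⟨g.i, g.j, g.l⟩
  map_one' := rfl
  map_mul' _ _ := rfl

theorem toHeisenberg_apply (g : FreeClassThree) : toHeisenberg g = ⟨g.i, g.j, g.l⟩ := rfl

theorem toHeisenberg_surjective : Function.Surjective toHeisenberg :=
  fun h => ⟨⟨h.x, h.y, h.z, 0, 0⟩, rfl⟩

theorem mk_mem_center_iff {K : Subgroup FreeClassThree} [K.Normal]
    (g : FreeClassThree) :
    (g : FreeClassThree ⧸ K) ∈ Subgroup.center (FreeClassThree ⧸ K) ↔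
      pcomm g X ∈ K ∧ pcomm g Y ∈ K := by
  have hcomm : ∀ h : FreeClassThree,
      Commute (g : FreeClassThree ⧸ K) (h : FreeClassThree ⧸ K) ↔ pcomm g h ∈ K := fun h => by
    rw [← pcomm_eq_one_iff, ← QuotientGroup.eq_one_iff, ← QuotientGroup.mk'_apply K (pcomm g h),
      map_pcomm]
    rfl
  have hgen : Subgroup.closure {(X : FreeClassThree ⧸ K), (Y : FreeClassThree ⧸ K)} ⊔
      Subgroup.center (FreeClassThree ⧸ K) = ⊤ := by
    rw [← Set.image_pair, ← QuotientGroup.coe_mk', ← MonoidHom.map_closure, closure_X_Y,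
      Subgroup.map_top_of_surjective _ (QuotientGroup.mk'_surjective K), top_sup_eq]
  refine ⟨fun hg => ⟨(hcomm X).1 ?_, (hcomm Y).1 ?_⟩, fun ⟨hX, hY⟩ => ?_⟩
  · exact (Subgroup.mem_center_iff.1 hg _).symm
  · exact (Subgroup.mem_center_iff.1 hg _).symm
  · exact mem_center_of_forall_commute hgen (by rintro h (rfl | rfl) <;> simp [hcomm, hX, hY])

end FreeClassThree

/-- The subgroup generated by `C^{p^{α+σ-γ}} E^{-p^σ}`, `D^{p^σ}` and `E^{p^γ}`. -/
def classThreeKernel (p α γ σ : ℕ) : Subgroup FreeClassThree where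
  carrier := {g | g.i = 0 ∧ g.j = 0 ∧ ∃ k, g.l = (p : ℤ) ^ (α + σ - γ) * k ∧
    (p : ℤ) ^ σ ∣ g.m ∧ (p : ℤ) ^ γ ∣ g.n + k * (p : ℤ) ^ σ}
  one_mem' := ⟨rfl, rfl, 0, by simp, by simp, by simp⟩
  mul_mem' := by
    rintro ⟨_, _, l, m, n⟩ ⟨_, _, l', m', n'⟩ ⟨rfl, rfl, k, hl, hm, hn⟩
      ⟨rfl, rfl, k', hl', hm', hn'⟩
    refine ⟨by simp, by simp, k + k', by simp_all; ring, by simpa using dvd_add hm hm', ?_⟩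
    simpa [add_mul, add_add_add_comm] using dvd_add hn hn'
  inv_mem' := by
    rintro ⟨_, _, l, m, n⟩ ⟨rfl, rfl, k, hl, hm, hn⟩
    refine ⟨by simp, by simp, -k, by simp_all, by simpa using hm, ?_⟩
    simpa [neg_add, add_comm] using hn.neg_right

section ClassThreeKernel

variable {p α γ σ : ℕ}

theorem classThreeKernel_normal (hσγ : σ ≤ γ) (hασ : 2 * γ ≤ α + σ) :
    (classThreeKernel p α γ σ).Normal := by
  refine ⟨?_⟩
  rintro ⟨_, _, l, m, n⟩ ⟨rfl, rfl, k, hl, hm, hn⟩ g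
  dsimp only at hl hm hn
  subst hl
  rw [FreeClassThree.conj_mk_zero_zero]
  refine ⟨rfl, rfl, k, rfl, ?_, ?_⟩
  · exact dvd_sub hm (((pow_dvd_pow _ (by omega)).mul_right k).mul_right _)
  · rw [sub_add_eq_add_sub]
    exact dvd_sub hn (((pow_dvd_pow _ (by omega)).mul_right k).mul_right _)

theorem pcomm_X_mem_classThreeKernel_iff (hodd : Odd p) (hσγ : σ ≤ γ) (hασ : 2 * γ ≤ α + σ)
    (g : FreeClassThree) : pcomm g FreeClassThree.X ∈ classThreeKernel p α γ σ ↔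
      (p : ℤ) ^ α ∣ g.j ∧ (p : ℤ) ^ σ ∣ g.l := by
  have hα : (p : ℤ) ^ α = (p : ℤ) ^ (α + σ - γ) * (p : ℤ) ^ (γ - σ) := by
    rw [← pow_add]; congr 1; omega
  have hγ : (p : ℤ) ^ γ = (p : ℤ) ^ (γ - σ) * (p : ℤ) ^ σ := by
    rw [← pow_add]; congr 1; omega
  have hodd' : Odd (p : ℤ) := by exact_mod_cast hodd
  rw [FreeClassThree.pcomm_X]
  constructor
  · rintro ⟨-, -, k, hj, hl, hk⟩
    dsimp only at hj hl hk
    have hchoose : (p : ℤ) ^ γ ∣ choose2 g.j :=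
      (pow_dvd_pow _ (by omega)).trans (hodd'.pow.dvd_choose2 ⟨k, hj⟩)
    obtain ⟨c, rfl⟩ :=
      (pow_dvd_mul_pow_iff (by exact_mod_cast hodd.pos.ne') hσγ).1 ((dvd_add_right hchoose).1 hk)
    exact ⟨⟨c, by rw [hj, hα, mul_assoc]⟩, hl⟩
  · rintro ⟨⟨c, hj⟩, hl⟩
    refine ⟨rfl, rfl, (p : ℤ) ^ (γ - σ) * c, by dsimp only; rw [hj, hα, mul_assoc], hl, ?_⟩
    refine dvd_add ((pow_dvd_pow _ (by omega)).trans (hodd'.pow.dvd_choose2 ⟨c, hj⟩)) ?_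
    exact ⟨c, by rw [hγ]; ring⟩

theorem pcomm_Y_mem_classThreeKernel_iff (hodd : Odd p) (hσγ : σ ≤ γ) (hασ : 2 * γ ≤ α + σ)
    (g : FreeClassThree) : pcomm g FreeClassThree.Y ∈ classThreeKernel p α γ σ ↔
      ∃ k, g.i = (p : ℤ) ^ (α + σ - γ) * k ∧ (p : ℤ) ^ γ ∣ g.l - k * (p : ℤ) ^ σ := by
  have hodd' : Odd (p : ℤ) := by exact_mod_cast hodd
  have hγ : (p : ℤ) ^ γ ∣ (p : ℤ) ^ (α + σ - γ) := pow_dvd_pow _ (by omega)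
  rw [FreeClassThree.pcomm_Y]
  constructor
  · rintro ⟨-, -, k, hi, -, hl⟩
    dsimp only at hi hl
    have hij : (p : ℤ) ^ γ ∣ g.i * g.j := (hγ.trans ⟨-k, by linarith⟩).mul_right _
    refine ⟨-k, by linarith, ?_⟩
    rw [show g.l - -k * (p : ℤ) ^ σ = g.l - g.i * g.j + k * (p : ℤ) ^ σ + g.i * g.j by ring]
    exact dvd_add hl hij
  · rintro ⟨k, hi, hl⟩
    have hij : (p : ℤ) ^ γ ∣ g.i * g.j := (hγ.trans ⟨k, hi⟩).mul_right _
    refine ⟨rfl, rfl, -k, by simp [hi], ?_, ?_⟩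
    · exact ((pow_dvd_pow _ (by omega)).trans (hodd'.pow.dvd_choose2 ⟨k, hi⟩)).neg_right
    · rw [show g.l - g.i * g.j + -k * (p : ℤ) ^ σ = g.l - k * (p : ℤ) ^ σ - g.i * g.j by ring]
      exact dvd_sub hl hij

theorem mk_mem_center_iff_toHeisenberg_mem (hodd : Odd p) (hσγ : σ ≤ γ) (hασ : 2 * γ ≤ α + σ)
    [(classThreeKernel p α γ σ).Normal] (g : FreeClassThree) :
    (g : FreeClassThree ⧸ classThreeKernel p α γ σ) ∈ Subgroup.center _ ↔
      FreeClassThree.toHeisenberg g ∈ twoGenKernel p α α γ σ := by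
  rw [FreeClassThree.mk_mem_center_iff, pcomm_X_mem_classThreeKernel_iff hodd hσγ hασ,
    FreeClassThree.toHeisenberg_apply,
    pcomm_Y_mem_classThreeKernel_iff hodd hσγ hασ, mem_twoGenKernel_iff (by omega) (by omega)]
  constructor
  · rintro ⟨⟨hj, -⟩, hl⟩
    exact ⟨hl, hj⟩
  · rintro ⟨⟨k, hi, hl⟩, hj⟩
    refine ⟨⟨hj, ?_⟩, k, hi, hl⟩
    simpa using dvd_add ((pow_dvd_pow (p : ℤ) hσγ).trans hl) (dvd_mul_left _ k)

end ClassThreeKernel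

section Capability

variable {p α β γ σ : ℕ}

theorem isCapable_twoGen (hodd : Odd p) (hσγ : σ ≤ γ) (hασ : 2 * γ ≤ α + σ) :
    IsCapable (PresentedGroup (twoGenRels p α α γ σ)) := by
  have := classThreeKernel_normal (p := p) hσγ hασ
  set φ : FreeClassThree →* PresentedGroup (twoGenRels p α α γ σ) :=
    (twoGenEquiv hσγ hασ).symm.toMonoidHom.comp
      ((QuotientGroup.mk' _).comp FreeClassThree.toHeisenberg)
  have hφ : ∀ g, φ g = 1 ↔
      (g : FreeClassThree ⧸ classThreeKernel p α γ σ) ∈ Subgroup.center _ := fun g => by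
    simp [φ, QuotientGroup.eq_one_iff, mk_mem_center_iff_toHeisenberg_mem hodd hσγ hασ]
  have hK : classThreeKernel p α γ σ ≤ φ.ker := fun g hg => by
    rw [MonoidHom.mem_ker, hφ, (QuotientGroup.eq_one_iff g).2 hg]
    exact one_mem _
  have hφsurj : Function.Surjective φ := by
    simp only [φ, MonoidHom.coe_comp, MulEquiv.coe_toMonoidHom]
    exact (MulEquiv.surjective _).comp
      ((QuotientGroup.mk'_surjective _).comp FreeClassThree.toHeisenberg_surjective)
  refine isCapable_of_surjective (QuotientGroup.lift _ φ hK)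
    (QuotientGroup.lift_surjective_of_surjective _ _ hφsurj hK) ?_
  ext z
  induction z using QuotientGroup.induction_on with
  | H g => rw [MonoidHom.mem_ker, QuotientGroup.lift_mk, hφ]

theorem le_of_twoGen_a_pow_eq_one (hp : 1 < p) (hσγ : σ ≤ γ) (hγβ : γ ≤ β)
    (hασ : 2 * γ ≤ α + σ) {e : ℕ}
    (h : (.of 0 : PresentedGroup (twoGenRels p α β γ σ)) ^ p ^ e = 1) : α ≤ e := by
  have hmem := congrArg (twoGenToHeisenberg hσγ hασ) h
  rw [map_pow, twoGenToHeisenberg_of_zero, map_one, ← QuotientGroup.mk_pow,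
    QuotientGroup.eq_one_iff, Heisenberg.A_pow, mem_twoGenKernel_iff hγβ (by omega)] at hmem
  simp only [Nat.cast_pow] at hmem
  obtain ⟨⟨k, hk, hz⟩, -⟩ := hmem
  have hp0 : (p : ℤ) ≠ 0 := by exact_mod_cast (zero_lt_one.trans hp).ne'
  rw [zero_sub, dvd_neg, pow_dvd_mul_pow_iff hp0 hσγ, show γ - σ = α - (α + σ - γ) by omega,
    ← pow_dvd_mul_pow_iff hp0 (by omega), mul_comm, ← hk] at hz
  exact (Nat.pow_dvd_pow_iff_le_right hp).1 (by exact_mod_cast hz)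

theorem le_of_twoGen_b_pow_eq_one (hp : 1 < p) (hσγ : σ ≤ γ) (hγβ : γ ≤ β)
    (hασ : 2 * γ ≤ α + σ) {e : ℕ}
    (h : (.of 1 : PresentedGroup (twoGenRels p α β γ σ)) ^ p ^ e = 1) : β ≤ e := by
  have hmem := congrArg (twoGenToHeisenberg hσγ hασ) h
  rw [map_pow, twoGenToHeisenberg_of_one, map_one, ← QuotientGroup.mk_pow,
    QuotientGroup.eq_one_iff, Heisenberg.B_pow, mem_twoGenKernel_iff hγβ (by omega)] at hmem
  simp only [Nat.cast_pow] at hmem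
  exact (Nat.pow_dvd_pow_iff_le_right hp).1 (by exact_mod_cast hmem.2)

theorem eq_of_isCapable_twoGen (hp : 1 < p) (hodd : Odd p) (hσγ : σ ≤ γ) (hγβ : γ ≤ β)
    (hγα : γ ≤ α) (hασ : 2 * γ ≤ α + σ) (hG : IsCapable (PresentedGroup (twoGenRels p α β γ σ))) :
    α = β := by
  obtain ⟨ha, hb, hc, hab, hba, -⟩ := twoGenRels_relations p α β γ σ
  set a : PresentedGroup (twoGenRels p α β γ σ) := .of 0
  set b : PresentedGroup (twoGenRels p α β γ σ) := .of 1
  have hgen : Subgroup.closure {a, b} = ⊤ := by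
    rw [← PresentedGroup.closure_range_of]
    congr 1
    ext g
    simp [a, b, Fin.exists_fin_two, eq_comm]
  have hbab : pcomm (pcomm b a) b = 1 := by
    rw [pcomm_eq_one_iff, ← inv_pcomm, Commute.inv_left_iff, ← pcomm_eq_one_iff, hba]
  have hc' : pcomm a b ^ p ^ γ = 1 := by rw [← inv_pcomm, inv_pow, hc, inv_one]
  have haβ := hG.pow_eq_one_of_pow_eq_one hgen hab hbab hc' (pow_dvd_choose_two hodd hγβ) hb
  have hbα := hG.pow_eq_one_of_pow_eq_one (Set.pair_comm a b ▸ hgen) hbab hab hc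
    (pow_dvd_choose_two hodd hγα) ha
  exact le_antisymm (le_of_twoGen_a_pow_eq_one hp hσγ hγβ hασ haβ)
    (le_of_twoGen_b_pow_eq_one hp hσγ hγβ hασ hbα)

end Capability

theorem capable_two_generator_class_two_general
    (p : ℕ) (hp : p.Prime) (hodd : Odd p)
    (α β γ σ : ℕ) (hβγ : γ ≤ β) (hαγ : γ ≤ α)
    (hασ : 2 * γ ≤ α + σ) (hσγ : σ < γ) :
    IsCapable (PresentedGroup (twoGenRels p α β γ σ)) ↔ α = β := by
  refine ⟨eq_of_isCapable_twoGen hp.one_lt hodd hσγ.le hβγ hαγ hασ, ?_⟩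
  rintro rfl
  exact isCapable_twoGen hodd hσγ.le hασ

/-- For an odd prime `p`, the `2`-generator `p`-group of class two presented by
`a^{p^α} = b^{p^β} = [b,a]^{p^γ} = [a,b,a] = [a,b,b] = a^{p^{α+σ-γ}}[b,a]^{p^σ} = e`
(with `β ≥ γ ≥ 1`, `α ≥ γ`, `α + σ ≥ 2γ`, `0 ≤ σ < γ`) is capable if and only
if `α = β`. -/
theorem capable_two_generator_class_two
    (p : ℕ) (hp : p.Prime) (hodd : Odd p)
    (α β γ σ : ℕ) (hβγ : γ ≤ β) (hγ : 1 ≤ γ) (hαγ : γ ≤ α)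
    (hασ : 2 * γ ≤ α + σ) (hσγ : σ < γ) :
    IsCapable (PresentedGroup (twoGenRels p α β γ σ)) ↔ α = β :=
  capable_two_generator_class_two_general p hp hodd α β γ σ hβγ hαγ hασ hσγ
end

section
/- Let c > 0 and n, r be positive integers, let w_1, …, w_r ∈ FreeGroup (Fin n), and let G be the presented group FreeGroup (Fin n) modulo the normal closure of {w_1, …, w_r}. Assume G is a finite nilpotent group of class exactly c and that the images x_1, …, x_n of the free generators form a minimal generating set of G (they generate G and no proper subset of them generates G). Let K = FreeGroup (Fin n)/γ_{c+2}(FreeGroup (Fin n)) be the relatively free nilpotent group of class c+1 on n generators y_1, …, y_n, let N be the normal closure in K of the elements w_1(y_1,…,y_n), …, w_r(y_1,…,y_n), and let M = [N, K]. Then G is capable if and only if G ≅ (K/M) / Z(K/M). -/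
universe u

/-- The relatively free nilpotent group of class `c+1` on `n` generators:
`FreeGroup (Fin n)` modulo `γ_{c+2} = lowerCentralSeries _ (c+1)`. -/
abbrev RelFreeNil (n c : ℕ) : Type :=
  FreeGroup (Fin n) ⧸ (⊤ : Subgroup (FreeGroup (Fin n))).lowerCentralSeries (c + 1)

/-- The normal closure `N` in `K = RelFreeNil n c` of the images
`w_1(y_1,…,y_n), …, w_r(y_1,…,y_n)` of the relators. -/
abbrev relatorsNormalClosure (n c r : ℕ) (w : Fin r → FreeGroup (Fin n)) :
    Subgroup (RelFreeNil n c) :=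
  Subgroup.normalClosure (Set.range fun j => (QuotientGroup.mk (w j) : RelFreeNil n c))

/-- `M = [N, K]`. -/
abbrev relatorsCommutator (n c r : ℕ) (w : Fin r → FreeGroup (Fin n)) :
    Subgroup (RelFreeNil n c) :=
  ⁅relatorsNormalClosure n c r w, (⊤ : Subgroup (RelFreeNil n c))⁆

/-!
Write `G = F/R` with `F` free. If `G ≅ H/Z(H)`, lift `F → G` to `ψ : F → H`; then `ψ` maps `R`
into `Z(H)`, so it kills `[R,F]`, and since `ψ(F)` together with `Z(H)` generates `H`, an element
central modulo `[R,F]` goes to a central element of `H`, i.e. lies in `R`. Hence `G` is capable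
iff `Z(F/[R,F]) = R/[R,F]`, iff `G ≅ (F/[R,F])/Z(F/[R,F])`. As `G` has class at most `c`,
`γ_{c+1}(F) ≤ R`, so `γ_{c+2}(F) ≤ [R,F]` and `K/M ≅ F/[R,F]`.
-/

open Subgroup QuotientGroup

theorem Subgroup.map_center_mulEquiv {G H : Type*} [Group G] [Group H] (e : G ≃* H) :
    (center G).map (e : G →* H) = center H := by
  ext x
  rw [map_equiv_eq_comap_symm, mem_comap]
  exact MulEquivClass.apply_mem_center_iff e.symm

noncomputable def MulEquiv.quotientCenterCongr {G H : Type*} [Group G] [Group H] (e : G ≃* H) :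
    G ⧸ center G ≃* H ⧸ center H :=
  congr _ _ e (map_center_mulEquiv e)

theorem Subgroup.lowerCentralSeries_le_of_quotient_eq_bot {G : Type*} [Group G] {R : Subgroup G}
    [R.Normal] {c : ℕ} (h : (⊤ : Subgroup (G ⧸ R)).lowerCentralSeries c = ⊥) :
    (⊤ : Subgroup G).lowerCentralSeries c ≤ R := by
  rw [← ker_mk' R, ← map_eq_bot_iff, map_lowerCentralSeries,
    map_top_of_surjective _ (mk'_surjective R), h]

theorem Subgroup.le_upperCentralSeriesStep_commutator {G : Type*} [Group G] (R : Subgroup G)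
    [R.Normal] : R ≤ Subgroup.upperCentralSeriesStep ⁅R, ⊤⁆ :=
  fun _ hr y => commutator_mem_commutator hr (mem_top y)

theorem Subgroup.mem_center_of_forall_commute {F H : Type*} [Group F] [Group H] {ψ : F →* H}
    (hψ : Function.Surjective ((mk' (center H)).comp ψ)) {z : H} (hz : ∀ y, Commute z (ψ y)) :
    z ∈ center H := by
  rw [mem_center_iff]
  intro h
  obtain ⟨y, hy⟩ := hψ h
  have hc : (ψ y)⁻¹ * h ∈ center H := QuotientGroup.eq.mp hy
  have hzh := (hz y).mul_right (mem_center_iff.mp hc z)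
  rw [mul_inv_cancel_left] at hzh
  exact hzh.eq.symm

theorem FreeGroup.exists_comp_eq_of_surjective {α H Q : Type*} [Group H] [Group Q] {p : H →* Q}
    (hp : Function.Surjective p) (f : FreeGroup α →* Q) : ∃ ψ : FreeGroup α →* H, p.comp ψ = f := by
  choose g hg using fun a => hp (f (FreeGroup.of a))
  exact ⟨FreeGroup.lift g, FreeGroup.ext_hom _ _ fun a => by simp [hg]⟩

theorem upperCentralSeriesStep_commutator_le_of_isCapable {α : Type*}
    (R : Subgroup (FreeGroup α)) [R.Normal] (hcap : IsCapable (FreeGroup α ⧸ R)) :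
    Subgroup.upperCentralSeriesStep ⁅R, ⊤⁆ ≤ R := by
  obtain ⟨H, _, ⟨e⟩⟩ := hcap
  obtain ⟨ψ, hψ⟩ := FreeGroup.exists_comp_eq_of_surjective (mk'_surjective (center H))
    ((e.symm : FreeGroup α ⧸ R →* H ⧸ center H).comp (mk' R))
  have hψ_apply (x : FreeGroup α) : (ψ x : H ⧸ center H) = e.symm x := DFunLike.congr_fun hψ x
  have hψ_surj : Function.Surjective ((mk' (center H)).comp ψ) := by
    rw [hψ]
    exact e.symm.surjective.comp (mk'_surjective R)
  have hψ_center : R ≤ (center H).comap ψ := fun r hr => by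
    rw [mem_comap, ← QuotientGroup.eq_one_iff, hψ_apply, (QuotientGroup.eq_one_iff r).mpr hr,
      map_one]
  have hψ_ker : ⁅R, ⊤⁆ ≤ ψ.ker := by
    rw [commutator_le]
    intro r hr y _
    rw [MonoidHom.mem_ker, map_commutatorElement, commutatorElement_eq_one_iff_commute]
    exact (mem_center_iff.mp (hψ_center hr) (ψ y)).symm
  intro z hz
  have hz_center : ψ z ∈ center H := mem_center_of_forall_commute hψ_surj fun y => by
    rw [← commutatorElement_eq_one_iff_commute, ← map_commutatorElement]
    exact hψ_ker (hz y)
  rw [← QuotientGroup.eq_one_iff, ← e.symm.map_eq_one_iff, ← hψ_apply]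
  exact (QuotientGroup.eq_one_iff _).mpr hz_center

theorem isCapable_iff_nonempty_mulEquiv_quotient_center {α : Type*}
    (R : Subgroup (FreeGroup α)) [R.Normal] :
    IsCapable (FreeGroup α ⧸ R) ↔ Nonempty ((FreeGroup α ⧸ R) ≃*
      (FreeGroup α ⧸ ⁅R, ⊤⁆) ⧸ center (FreeGroup α ⧸ (⁅R, ⊤⁆ : Subgroup (FreeGroup α)))) := by
  refine ⟨fun hcap => ?_, fun ⟨e⟩ => ⟨_, _, ⟨e.symm⟩⟩⟩
  have hZ : center (FreeGroup α ⧸ ⁅R, ⊤⁆) = R.map (mk' ⁅R, ⊤⁆) := by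
    rw [← map_comap_eq_self_of_surjective (mk'_surjective _) (center _),
      ← Subgroup.upperCentralSeriesStep_eq_comap_center,
      le_antisymm (upperCentralSeriesStep_commutator_le_of_isCapable R hcap)
        (le_upperCentralSeriesStep_commutator R)]
  exact ⟨((quotientMulEquivOfEq hZ).trans
    (quotientQuotientEquivQuotient _ _ (commutator_le_left R ⊤))).symm⟩

theorem capable_iff_special_witness_general
    (c n r : ℕ)
    (w : Fin r → FreeGroup (Fin n))
    (hnil : (⊤ : Subgroup (PresentedGroup (Set.range w))).lowerCentralSeries c = ⊥) :
    IsCapable (PresentedGroup (Set.range w)) ↔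
      Nonempty (PresentedGroup (Set.range w) ≃*
        ((RelFreeNil n c ⧸ relatorsCommutator n c r w) ⧸
          Subgroup.center (RelFreeNil n c ⧸ relatorsCommutator n c r w))) := by
  set R : Subgroup (FreeGroup (Fin n)) := normalClosure (Set.range w)
  have hγ : (⊤ : Subgroup (FreeGroup (Fin n))).lowerCentralSeries (c + 1) ≤ ⁅R, ⊤⁆ :=
    commutator_mono (lowerCentralSeries_le_of_quotient_eq_bot hnil) le_rfl
  have hM : relatorsCommutator n c r w = (⁅R, ⊤⁆ : Subgroup (FreeGroup (Fin n))).map (mk' _) := by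
    rw [map_commutator, map_top_of_surjective _ (mk'_surjective _),
      map_normalClosure _ _ (mk'_surjective _), ← Set.range_comp]
    rfl
  let E : RelFreeNil n c ⧸ relatorsCommutator n c r w ≃* FreeGroup (Fin n) ⧸ ⁅R, ⊤⁆ :=
    (quotientMulEquivOfEq hM).trans (quotientQuotientEquivQuotient _ _ hγ)
  exact (isCapable_iff_nonempty_mulEquiv_quotient_center R).trans
    ⟨fun ⟨e⟩ => ⟨e.trans E.quotientCenterCongr.symm⟩, fun ⟨e⟩ => ⟨e.trans E.quotientCenterCongr⟩⟩

/-- Let `G` be a finite nilpotent group of class exactly `c`, presented on `n`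
generators (forming a minimal generating set of `G`) by relators `w_1, …, w_r`.
Let `K` be the relatively free nilpotent group of class `c+1` on `n` generators,
`N` the normal closure in `K` of the relators, and `M = [N,K]`. Then `G` is capable
if and only if `G ≅ (K/M) / Z(K/M)`. -/
theorem capable_iff_special_witness
    (c n r : ℕ) (hc : 0 < c) (hn : 0 < n) (hr : 0 < r)
    (w : Fin r → FreeGroup (Fin n))
    (hfin : Finite (PresentedGroup (Set.range w)))
    (hnil : (⊤ : Subgroup (PresentedGroup (Set.range w))).lowerCentralSeries c = ⊥)
    (hclass : (⊤ : Subgroup (PresentedGroup (Set.range w))).lowerCentralSeries (c - 1) ≠ ⊥)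
    (hgen : Subgroup.closure
      (Set.range fun i : Fin n => (PresentedGroup.of i : PresentedGroup (Set.range w))) = ⊤)
    (hmin : ∀ s : Set (PresentedGroup (Set.range w)),
      s ⊂ Set.range (fun i : Fin n => (PresentedGroup.of i : PresentedGroup (Set.range w))) →
      Subgroup.closure s ≠ ⊤) :
    IsCapable (PresentedGroup (Set.range w)) ↔
      Nonempty (PresentedGroup (Set.range w) ≃*
        ((RelFreeNil n c ⧸ relatorsCommutator n c r w) ⧸
          Subgroup.center (RelFreeNil n c ⧸ relatorsCommutator n c r w))) :=
  capable_iff_special_witness_general c n r w hnil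
end

section
/- Let k and n be positive integers with n > 1. Then for every s with 1 ≤ s ≤ k, ⌊(k-s)/(n-1)⌋ + ⌊log_n(s+1)⌋ ≤ ⌊k/(n-1)⌋; and if n - 1 ≤ k, then equality holds at s = n - 1, so that the maximum of ⌊(k-s)/(n-1)⌋ + ⌊log_n(s+1)⌋ over 1 ≤ s ≤ k equals ⌊k/(n-1)⌋. -/
lemma pow_ge_mul_add_one (n t : ℕ) (hn : 1 ≤ n) : t * (n - 1) + 1 ≤ n ^ t := by
  induction t with
  | zero => simp
  | succ t ih =>
    have : (t + 1) * (n - 1) + 1 = (t * (n - 1) + 1) + (n - 1) := by ring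
    rw [this, pow_succ]
    calc t * (n - 1) + 1 + (n - 1) ≤ n ^ t + (n - 1) := by omega
      _ ≤ n ^ t * n := by
          obtain ⟨m, rfl⟩ : ∃ m, n = m + 1 := ⟨n - 1, by omega⟩
          have h1 : 1 ≤ (m + 1) ^ t := Nat.one_le_pow _ _ (by omega)
          simp only [Nat.add_sub_cancel]
          nlinarith

/-- For positive integers `k` and `n > 1`, the quantity
`⌊(k-s)/(n-1)⌋ + ⌊log_n(s+1)⌋` is at most `⌊k/(n-1)⌋` for all `1 ≤ s ≤ k`,
and when `n - 1 ≤ k` equality holds at `s = n - 1`; hence the maximum over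
`1 ≤ s ≤ k` equals `⌊k/(n-1)⌋`. -/
theorem max_floor_log_bound (k n : ℕ) (hk : 0 < k) (hn : 1 < n) :
    (∀ s : ℕ, 1 ≤ s → s ≤ k →
      (k - s) / (n - 1) + Nat.log n (s + 1) ≤ k / (n - 1)) ∧
    (n - 1 ≤ k →
      (k - (n - 1)) / (n - 1) + Nat.log n ((n - 1) + 1) = k / (n - 1)) := by
  have hd : 0 < n - 1 := by omega
  constructor
  · intro s hs1 hsk
    set t := Nat.log n (s + 1) with ht
    have hpow : n ^ t ≤ s + 1 := Nat.pow_log_le_self n (by omega)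
    have hle : t * (n - 1) ≤ s := by
      have := pow_ge_mul_add_one n t (by omega)
      omega
    have key : (k - s) / (n - 1) + t = (k - s + t * (n - 1)) / (n - 1) :=
      (Nat.add_mul_div_right _ _ hd).symm
    rw [key]
    exact Nat.div_le_div_right (by omega)
  · intro hnk
    have hlog : Nat.log n ((n - 1) + 1) = 1 := by
      have : (n - 1) + 1 = n := by omega
      rw [this]
      have := Nat.log_pow hn 1
      simpa using this
    rw [hlog]
    have : (k - (n - 1)) / (n - 1) + 1 = (k - (n - 1) + 1 * (n - 1)) / (n - 1) :=
      (Nat.add_mul_div_right _ _ hd).symm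
    rw [this, one_mul, Nat.sub_add_cancel hnk]
end

section
/- Let p be a prime, n a positive integer, and m an integer with 0 < m ≤ p^n. If a_1, …, a_m are integers, then p^{n - ⌊log_p m⌋} divides the integer a_1·C(p^n, 1) + a_2·C(p^n, 2) + ⋯ + a_m·C(p^n, m), where ⌊log_p m⌋ is the smallest integer d with p^{d+1} > m. -/
/-!
By Kummer's theorem `v_p(C(p^n, k)) = n - v_p(k)` for `0 < k ≤ p^n`, and `p^{v_p(k)} ≤ k` gives
`v_p(k) ≤ ⌊log_p k⌋ ≤ ⌊log_p m⌋`, so every term of the sum is divisible by `p^{n - ⌊log_p m⌋}`.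
-/

theorem Nat.Prime.pow_sub_log_dvd_choose_prime_pow {p n k : ℕ} (hp : p.Prime) (hkn : k ≤ p ^ n)
    (hk0 : k ≠ 0) : p ^ (n - Nat.log p k) ∣ (p ^ n).choose k := by
  have hval : multiplicity p k ≤ Nat.log p k :=
    (Nat.le_log_iff_pow_le hp.one_lt hk0).2 (Nat.le_of_dvd (Nat.pos_of_ne_zero hk0)
      (pow_multiplicity_dvd p k))
  apply pow_dvd_of_le_emultiplicity
  rw [hp.emultiplicity_choose_prime_pow hkn hk0]
  exact_mod_cast Nat.sub_le_sub_left hval n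

theorem pow_dvd_sum_mul_choose_general
    (p : ℕ) (hp : p.Prime) (n : ℕ) (m : ℕ)
    (hmp : m ≤ p ^ n) (a : ℕ → ℤ) :
    (p : ℤ) ^ (n - Nat.log p m) ∣
      ∑ i ∈ Finset.Icc 1 m, a i * (Nat.choose (p ^ n) i : ℤ) := by
  refine Finset.dvd_sum fun i hi => Dvd.dvd.mul_left ?_ _
  obtain ⟨hi1, him⟩ := Finset.mem_Icc.1 hi
  have hlog : n - Nat.log p m ≤ n - Nat.log p i := Nat.sub_le_sub_left (Nat.log_mono_right him) n
  exact_mod_cast (pow_dvd_pow p hlog).trans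
    (hp.pow_sub_log_dvd_choose_prime_pow (him.trans hmp) (by omega))

/-- For a prime `p`, a positive integer `n`, and `0 < m ≤ p^n`, any integer linear
combination `a_1·C(p^n,1) + ⋯ + a_m·C(p^n,m)` of the binomial coefficients is
divisible by `p^{n - ⌊log_p m⌋}`. -/
theorem pow_dvd_sum_mul_choose
    (p : ℕ) (hp : p.Prime) (n : ℕ) (hn : 0 < n) (m : ℕ) (hm : 0 < m)
    (hmp : m ≤ p ^ n) (a : ℕ → ℤ) :
    (p : ℤ) ^ (n - Nat.log p m) ∣
      ∑ i ∈ Finset.Icc 1 m, a i * (Nat.choose (p ^ n) i : ℤ) :=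
  pow_dvd_sum_mul_choose_general p hp n m hmp a
end
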